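/- arXiv:2507.05990 — 3 statements merged into one kernel-verified Lean document; each statement's English description precedes it below -/
import Mathlib

section
/- If Z = Y ⊙ W entrywise, where the rows of W are i.i.d. random vectors independent of Y with E[W W^⊤] having all entries nonzero, then the surrogate estimator Ŝ_yy := (1/n) Z^⊤ Z ⊘ E[W W^⊤] (entrywise division) is an unbiased estimator of E[Y Y^⊤], i.e., E[Ŝ_yy] = E[(1/n) Y^⊤ Y]. -/
open MeasureTheory ProbabilityTheory

/-! Since `W` is independent of `Y`, the product `(Y i j W i j)(Y i k W i k)` factors in
expectation as `E[Y i j Y i k] · E[W i j W i k] = E[Y i j Y i k] · M j k`; summing over the rows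
and dividing by `M j k` leaves `E[(1/n) ∑ i, Y i j Y i k]`. -/

section EntryProducts

variable {Ω ι κ : Type*} [MeasurableSpace Ω] {μ : Measure Ω} {W Y : Ω → ι → κ → ℝ}

lemma ProbabilityTheory.IndepFun.entry_mul_entry (hWY : IndepFun W Y μ) (i i' : ι) (j k : κ) :
    IndepFun (fun ω => W ω i j * W ω i' k) (fun ω => Y ω i j * Y ω i' k) μ := by
  have hφ : Measurable fun x : ι → κ → ℝ => x i j * x i' k := by fun_prop
  exact hWY.comp hφ hφ

lemma integrable_hadamard_entry_mul (hWY : IndepFun W Y μ) {i i' : ι} {j k : κ}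
    (hW : Integrable (fun ω => W ω i j * W ω i' k) μ)
    (hY : Integrable (fun ω => Y ω i j * Y ω i' k) μ) :
    Integrable (fun ω => Y ω i j * W ω i j * (Y ω i' k * W ω i' k)) μ := by
  convert (hWY.entry_mul_entry i i' j k).integrable_mul hW hY using 2 with ω
  simp only [Pi.mul_apply]
  ring

lemma integral_hadamard_entry_mul (hWY : IndepFun W Y μ) {i i' : ι} {j k : κ}
    (hW : Integrable (fun ω => W ω i j * W ω i' k) μ)
    (hY : Integrable (fun ω => Y ω i j * Y ω i' k) μ) :
    ∫ ω, Y ω i j * W ω i j * (Y ω i' k * W ω i' k) ∂μ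
      = (∫ ω, Y ω i j * Y ω i' k ∂μ) * ∫ ω, W ω i j * W ω i' k ∂μ := by
  rw [mul_comm, ← (hWY.entry_mul_entry i i' j k).integral_mul_eq_mul_integral
    hW.aestronglyMeasurable hY.aestronglyMeasurable]
  congr 1 with ω
  simp only [Pi.mul_apply]
  ring

end EntryProducts

theorem surrogate_Syy_unbiased_general
    {Ω : Type*} [MeasurableSpace Ω] (μ : Measure Ω)
    {n q : ℕ}
    (Y W Z : Ω → Fin n → Fin q → ℝ)
    (M : Fin q → Fin q → ℝ)
    (hM : ∀ j k, M j k ≠ 0)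
    -- `W` is independent of `Y`
    (hIndep : IndepFun W Y μ)
    -- the rows of `W` are i.i.d. copies of a random vector `W̃` with `E[W̃ W̃ᵀ] = M`
    (hW2 : ∀ (i : Fin n) (j k : Fin q), ∫ ω, W ω i j * W ω i k ∂μ = M j k)
    (hIntY : ∀ (i : Fin n) (j k : Fin q), Integrable (fun ω => Y ω i j * Y ω i k) μ)
    (hIntW : ∀ (i : Fin n) (j k : Fin q), Integrable (fun ω => W ω i j * W ω i k) μ)
    (hZ : ∀ ω i j, Z ω i j = Y ω i j * W ω i j) :
    ∀ j k, (∫ ω, ((1 : ℝ) / n) * (∑ i, Z ω i j * Z ω i k) / M j k ∂μ)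
        = ∫ ω, ((1 : ℝ) / n) * (∑ i, Y ω i j * Y ω i k) ∂μ := by
  intro j k
  obtain rfl : Z = fun ω i j => Y ω i j * W ω i j := by
    funext ω i j
    exact hZ ω i j
  calc ∫ ω, (1 : ℝ) / n * (∑ i, Y ω i j * W ω i j * (Y ω i k * W ω i k)) / M j k ∂μ
      = (1 : ℝ) / n * (∑ i, ∫ ω, Y ω i j * W ω i j * (Y ω i k * W ω i k) ∂μ) / M j k := by
        rw [integral_div, integral_const_mul, integral_finsetSum _ fun i _ =>
          integrable_hadamard_entry_mul hIndep (hIntW i j k) (hIntY i j k)]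
    _ = (1 : ℝ) / n * (∑ i, (∫ ω, Y ω i j * Y ω i k ∂μ) * M j k) / M j k := by
        congr 3 with i
        rw [integral_hadamard_entry_mul hIndep (hIntW i j k) (hIntY i j k), hW2]
    _ = ∫ ω, (1 : ℝ) / n * (∑ i, Y ω i j * Y ω i k) ∂μ := by
        rw [← Finset.sum_mul, ← mul_assoc, mul_div_cancel_right₀ _ (hM j k), integral_const_mul,
          integral_finsetSum _ fun i _ => hIntY i j k]

/-- If `Z = Y ⊙ W` entrywise, where the rows of `W` are i.i.d. random vectors independent of
`Y` with `E[W W^⊤]` having all entries nonzero, then the surrogate estimator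
`Ŝ_yy := (1/n) Zᵀ Z ⊘ E[W Wᵀ]` (entrywise division) is an unbiased estimator of
`E[Yᵀ Y]/n`, entrywise. -/
theorem surrogate_Syy_unbiased
    {Ω : Type*} [MeasurableSpace Ω] (μ : Measure Ω) [IsProbabilityMeasure μ]
    {n q : ℕ}
    (Y W Z : Ω → Fin n → Fin q → ℝ)
    (M : Fin q → Fin q → ℝ)
    (hM : ∀ j k, M j k ≠ 0)
    -- `W` is independent of `Y`
    (hIndep : IndepFun W Y μ)
    -- the rows of `W` are i.i.d. copies of a random vector `W̃` with `E[W̃ W̃ᵀ] = M`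
    (hW2 : ∀ (i : Fin n) (j k : Fin q), ∫ ω, W ω i j * W ω i k ∂μ = M j k)
    (hIntY : ∀ (i : Fin n) (j k : Fin q), Integrable (fun ω => Y ω i j * Y ω i k) μ)
    (hIntW : ∀ (i : Fin n) (j k : Fin q), Integrable (fun ω => W ω i j * W ω i k) μ)
    (hZ : ∀ ω i j, Z ω i j = Y ω i j * W ω i j) :
    ∀ j k, (∫ ω, ((1 : ℝ) / n) * (∑ i, Z ω i j * Z ω i k) / M j k ∂μ)
        = ∫ ω, ((1 : ℝ) / n) * (∑ i, Y ω i j * Y ω i k) ∂μ :=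
  surrogate_Syy_unbiased_general μ Y W Z M hM hIndep hW2 hIntY hIntW hZ
end

section
/- Let β̂ minimize β ↦ (1/2)β^⊤ S_xx β − s^⊤ β + λ‖β‖₁ over ℝ^p, where S_xx is positive semi-definite. Let β* be supported on S ⊆ {1,…,p}, set δ = β̂ − β*, and suppose ‖s − S_xx β*‖_∞ ≤ λ/2. Then (1/2) δ^⊤ S_xx δ ≤ (3λ/2)‖δ_S‖₁ − (λ/2)‖δ_{S^c}‖₁; in particular δ lies in the cone {δ : ‖δ_{S^c}‖₁ ≤ 3 ‖δ_S‖₁}. -/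
/-!
Comparing the objective at `β̂` with its value at `β*` and expanding the quadratic around `β*`
gives `½ δᵀ S_xx δ ≤ δᵀ(s − S_xx β*) + λ(‖β*‖₁ − ‖β̂‖₁)`. The first term is at most
`(λ/2)‖δ‖₁` by Hölder, and since `β*` vanishes off `S`, the triangle inequality on `S` bounds the
second by `λ(‖δ_S‖₁ − ‖δ_{Sᶜ}‖₁)`. The cone condition follows because the left side is
nonnegative.
-/

open Matrix

/-- The vector ℓ¹ norm. -/
noncomputable def l1 {p : ℕ} (v : Fin p → ℝ) : ℝ := ∑ i, |v i|

/-- `restr v S` agrees with `v` on `S` and is zero outside `S`. -/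
def restr {p : ℕ} (v : Fin p → ℝ) (S : Finset (Fin p)) : Fin p → ℝ :=
  fun i => if i ∈ S then v i else 0

theorem Matrix.IsSymm.quadratic_sub_eq {n : Type*} [Fintype n] {Q : Matrix n n ℝ}
    (hQ : Q.IsSymm) (s x y : n → ℝ) :
    ((1 / 2) * (x ⬝ᵥ (Q *ᵥ x)) - s ⬝ᵥ x) - ((1 / 2) * (y ⬝ᵥ (Q *ᵥ y)) - s ⬝ᵥ y) =
      (1 / 2) * ((x - y) ⬝ᵥ (Q *ᵥ (x - y))) - (x - y) ⬝ᵥ (s - Q *ᵥ y) := by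
  have hcomm : y ⬝ᵥ (Q *ᵥ x) = x ⬝ᵥ (Q *ᵥ y) := by
    rw [dotProduct_mulVec, ← mulVec_transpose, hQ.eq, dotProduct_comm]
  simp only [mulVec_sub, dotProduct_sub, sub_dotProduct, hcomm, dotProduct_comm s]
  ring

theorem dotProduct_le_mul_l1 {p : ℕ} {u : Fin p → ℝ} {c : ℝ} (hu : ∀ i, |u i| ≤ c)
    (w : Fin p → ℝ) : w ⬝ᵥ u ≤ c * l1 w := by
  rw [l1, Finset.mul_sum]
  refine Finset.sum_le_sum fun i _ => ?_
  calc w i * u i ≤ |w i| * |u i| := (le_abs_self _).trans (abs_mul _ _).le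
    _ ≤ |w i| * c := mul_le_mul_of_nonneg_left (hu i) (abs_nonneg _)
    _ = c * |w i| := mul_comm _ _

theorem l1_restr {p : ℕ} (v : Fin p → ℝ) (S : Finset (Fin p)) :
    l1 (restr v S) = ∑ i ∈ S, |v i| := by
  rw [l1, ← Finset.sum_subset (Finset.subset_univ S)]
  · exact Finset.sum_congr rfl fun i hi => by simp [restr, hi]
  · intro i _ hi
    simp [restr, hi]

theorem l1_eq_l1_restr_add_l1_restr_compl {p : ℕ} (v : Fin p → ℝ) (S : Finset (Fin p)) :
    l1 v = l1 (restr v S) + l1 (restr v Sᶜ) := by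
  rw [l1_restr, l1_restr, Finset.sum_add_sum_compl, l1]

theorem l1_sub_l1_le_of_support {p : ℕ} {S : Finset (Fin p)} {x : Fin p → ℝ}
    (hx : ∀ j, j ∉ S → x j = 0) (y : Fin p → ℝ) :
    l1 x - l1 y ≤ l1 (restr (y - x) S) - l1 (restr (y - x) Sᶜ) := by
  have hS : ∑ i ∈ S, (|x i| - |y i|) ≤ ∑ i ∈ S, |(y - x) i| :=
    Finset.sum_le_sum fun i _ => by
      simpa [abs_sub_comm] using abs_sub_abs_le_abs_sub (x i) (y i)
  have hx_compl : ∑ i ∈ Sᶜ, |x i| = 0 :=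
    Finset.sum_eq_zero fun i hi => by simp [hx i (Finset.mem_compl.mp hi)]
  have hy_compl : ∑ i ∈ Sᶜ, |y i| = ∑ i ∈ Sᶜ, |(y - x) i| :=
    Finset.sum_congr rfl fun i hi => by simp [hx i (Finset.mem_compl.mp hi)]
  rw [l1_eq_l1_restr_add_l1_restr_compl x S, l1_eq_l1_restr_add_l1_restr_compl y S]
  simp only [l1_restr, Finset.sum_sub_distrib] at hS ⊢
  linarith

/-- Basic inequality of the Lasso: if `β̂` minimizes
`β ↦ (1/2)βᵀ S_xx β − sᵀβ + λ‖β‖₁` with `S_xx` PSD, `β*` is supported on `S`, and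
`‖s − S_xx β*‖_∞ ≤ λ/2`, then with `δ = β̂ − β*`,
`(1/2) δᵀ S_xx δ ≤ (3λ/2)‖δ_S‖₁ − (λ/2)‖δ_{Sᶜ}‖₁`; in particular
`‖δ_{Sᶜ}‖₁ ≤ 3‖δ_S‖₁`. -/
theorem lasso_basic_inequality {p : ℕ}
    (Sxx : Matrix (Fin p) (Fin p) ℝ) (hPSD : Sxx.PosSemidef)
    (s : Fin p → ℝ) (lam : ℝ) (hlam : 0 < lam)
    (S : Finset (Fin p))
    (βstar βhat : Fin p → ℝ)
    (hsupp : ∀ j, j ∉ S → βstar j = 0)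
    (hmin : ∀ β : Fin p → ℝ,
      (1 / 2) * (βhat ⬝ᵥ (Sxx *ᵥ βhat)) - s ⬝ᵥ βhat + lam * l1 βhat ≤
        (1 / 2) * (β ⬝ᵥ (Sxx *ᵥ β)) - s ⬝ᵥ β + lam * l1 β)
    (hdual : ∀ i, |s i - (Sxx *ᵥ βstar) i| ≤ lam / 2) :
    (1 / 2) * ((βhat - βstar) ⬝ᵥ (Sxx *ᵥ (βhat - βstar))) ≤
        (3 * lam / 2) * l1 (restr (βhat - βstar) S)
          - (lam / 2) * l1 (restr (βhat - βstar) Sᶜ) ∧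
      l1 (restr (βhat - βstar) Sᶜ) ≤ 3 * l1 (restr (βhat - βstar) S) := by
  have hexpand := (isHermitian_iff_isSymm.mp hPSD.isHermitian).quadratic_sub_eq s βhat βstar
  have hholder := dotProduct_le_mul_l1 (u := s - Sxx *ᵥ βstar) hdual (βhat - βstar)
  rw [l1_eq_l1_restr_add_l1_restr_compl _ S] at hholder
  have hpenalty := mul_le_mul_of_nonneg_left (l1_sub_l1_le_of_support hsupp βhat) hlam.le
  have hbasic : (1 / 2) * ((βhat - βstar) ⬝ᵥ (Sxx *ᵥ (βhat - βstar))) ≤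
      (3 * lam / 2) * l1 (restr (βhat - βstar) S)
        - (lam / 2) * l1 (restr (βhat - βstar) Sᶜ) := by
    linarith [hmin βstar]
  refine ⟨hbasic, ?_⟩
  have hquad : 0 ≤ (βhat - βstar) ⬝ᵥ (Sxx *ᵥ (βhat - βstar)) := by
    simpa using hPSD.dotProduct_mulVec_nonneg (βhat - βstar)
  have hcone : 0 ≤ lam * (3 * l1 (restr (βhat - βstar) S) - l1 (restr (βhat - βstar) Sᶜ)) := by
    linarith
  linarith [nonneg_of_mul_nonneg_right hcone hlam]
end

section
/- Suppose EL(Δ) = (1/2) Tr(Δ^⊤ S_xx Δ Θ*) ≥ κ ⦀Δ⦀_F² for all Δ in the cone C(S), and let Θ̂ satisfy ⦀Θ̂ − Θ*⦀₂ ≤ Δ₁. Then the empirical excess loss with Θ̂ in place of Θ* satisfies (1/2) Tr(Δ^⊤ S_xx Δ Θ̂) ≥ (κ − ⦀S_xx⦀₂ Δ₁/2) ⦀Δ⦀_F² for all Δ ∈ C(S). -/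
/-! The perturbation `Θ̂ - Θ*` changes the quadratic form by `Tr(Δᵀ Sxx Δ (Θ̂ - Θ*))`. Writing it
as the Frobenius inner product of `Δ` with `Sxx Δ (Θ̂ - Θ*)`, Cauchy–Schwarz and the bound
`⦀A M B⦀_F ≤ ⦀A⦀₂ ⦀M⦀_F ⦀B⦀₂` (column by column for `A`, after transposing for `B`) show that it
is at most `⦀Sxx⦀₂ Δ₁ ⦀Δ⦀_F²` in absolute value, so the restricted eigenvalue `κ` drops by at
most `⦀Sxx⦀₂ Δ₁ / 2`. -/

open Matrix

/-- The spectral norm (operator 2-norm) of a square real matrix. -/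
noncomputable def spec {p : ℕ} (A : Matrix (Fin p) (Fin p) ℝ) : ℝ :=
  ‖LinearMap.toContinuousLinearMap (Matrix.toEuclideanLin A)‖

/-- The Frobenius norm of a matrix. -/
noncomputable def frob {p q : ℕ} (A : Matrix (Fin p) (Fin q) ℝ) : ℝ :=
  Real.sqrt (∑ i, ∑ j, (A i j) ^ 2)

/-- The elementwise ℓ¹ norm of a matrix. -/
noncomputable def l11 {p q : ℕ} (M : Matrix (Fin p) (Fin q) ℝ) : ℝ :=
  ∑ i, ∑ j, |M i j|

/-- `restr2 M S` agrees with `M` on the index set `S` and is zero elsewhere. -/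
def restr2 {p q : ℕ} (M : Matrix (Fin p) (Fin q) ℝ) (S : Finset (Fin p × Fin q)) :
    Matrix (Fin p) (Fin q) ℝ :=
  fun i j => if (i, j) ∈ S then M i j else 0

section

open scoped Matrix.Norms.L2Operator

lemma spec_eq_l2_opNorm {p : ℕ} (A : Matrix (Fin p) (Fin p) ℝ) : spec A = ‖A‖ := rfl

lemma spec_nonneg {p : ℕ} (A : Matrix (Fin p) (Fin p) ℝ) : 0 ≤ spec A :=
  norm_nonneg _

lemma spec_transpose {p : ℕ} (A : Matrix (Fin p) (Fin p) ℝ) : spec Aᵀ = spec A := by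
  rw [spec_eq_l2_opNorm, spec_eq_l2_opNorm, ← conjTranspose_eq_transpose_of_trivial,
    l2_opNorm_conjTranspose]

lemma sum_sq_mulVec_le {p : ℕ} (A : Matrix (Fin p) (Fin p) ℝ) (v : Fin p → ℝ) :
    ∑ i, (A *ᵥ v) i ^ 2 ≤ spec A ^ 2 * ∑ i, v i ^ 2 := by
  have h := A.l2_opNorm_mulVec (WithLp.toLp 2 v)
  rw [← spec_eq_l2_opNorm] at h
  have h2 := pow_le_pow_left₀ (norm_nonneg _) h 2
  simpa [mul_pow, EuclideanSpace.norm_sq_eq] using h2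

end

lemma frob_nonneg {p q : ℕ} (A : Matrix (Fin p) (Fin q) ℝ) : 0 ≤ frob A :=
  Real.sqrt_nonneg _

lemma frob_sq {p q : ℕ} (A : Matrix (Fin p) (Fin q) ℝ) :
    frob A ^ 2 = ∑ i, ∑ j, A i j ^ 2 :=
  Real.sq_sqrt (by positivity)

lemma frob_transpose {p q : ℕ} (A : Matrix (Fin p) (Fin q) ℝ) : frob Aᵀ = frob A := by
  rw [frob, frob, Finset.sum_comm]
  rfl

lemma frob_mul_le_spec_mul_frob {p q : ℕ} (A : Matrix (Fin p) (Fin p) ℝ)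
    (M : Matrix (Fin p) (Fin q) ℝ) :
    frob (A * M) ≤ spec A * frob M := by
  refine (pow_le_pow_iff_left₀ (frob_nonneg _) (mul_nonneg (spec_nonneg A) (frob_nonneg M))
    two_ne_zero).mp ?_
  have hcol : ∀ j, ∑ i, (A * M) i j ^ 2 ≤ spec A ^ 2 * ∑ i, M i j ^ 2 := fun j =>
    sum_sq_mulVec_le A (fun i => M i j)
  calc frob (A * M) ^ 2 = ∑ j, ∑ i, (A * M) i j ^ 2 := by rw [frob_sq, Finset.sum_comm]
    _ ≤ ∑ j, spec A ^ 2 * ∑ i, M i j ^ 2 := Finset.sum_le_sum fun j _ => hcol j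
    _ = (spec A * frob M) ^ 2 := by rw [← Finset.mul_sum, mul_pow, frob_sq, Finset.sum_comm]

lemma frob_mul_le_frob_mul_spec {p q : ℕ} (M : Matrix (Fin p) (Fin q) ℝ)
    (A : Matrix (Fin q) (Fin q) ℝ) :
    frob (M * A) ≤ frob M * spec A := by
  rw [← frob_transpose, transpose_mul, mul_comm, ← spec_transpose, ← frob_transpose M]
  exact frob_mul_le_spec_mul_frob Aᵀ Mᵀ

lemma abs_trace_transpose_mul_le {p q : ℕ} (Δ N : Matrix (Fin p) (Fin q) ℝ) :
    |trace (Δᵀ * N)| ≤ frob Δ * frob N := by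
  have htrace : trace (Δᵀ * N) = ∑ i, ∑ j, Δ i j * N i j := by
    simp only [trace, diag, mul_apply, transpose_apply]
    exact Finset.sum_comm
  rw [htrace, frob, frob, ← Real.sqrt_mul (by positivity), ← Real.sqrt_sq_eq_abs]
  refine Real.sqrt_le_sqrt ?_
  simp only [← Fintype.sum_prod_type']
  exact Finset.sum_mul_sq_le_sq_mul_sq _ _ _

lemma abs_trace_sandwich_le {p q : ℕ} (A : Matrix (Fin p) (Fin p) ℝ)
    (B : Matrix (Fin q) (Fin q) ℝ) (Δ : Matrix (Fin p) (Fin q) ℝ) :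
    |trace (Δᵀ * A * Δ * B)| ≤ spec A * spec B * frob Δ ^ 2 := by
  rw [Matrix.mul_assoc, Matrix.mul_assoc]
  calc |trace (Δᵀ * (A * (Δ * B)))| ≤ frob Δ * frob (A * (Δ * B)) :=
        abs_trace_transpose_mul_le _ _
    _ ≤ frob Δ * (spec A * frob (Δ * B)) := by
        gcongr
        exacts [frob_nonneg Δ, frob_mul_le_spec_mul_frob _ _]
    _ ≤ frob Δ * (spec A * (frob Δ * spec B)) := by
        gcongr
        exacts [frob_nonneg Δ, spec_nonneg A, frob_mul_le_frob_mul_spec _ _]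
    _ = spec A * spec B * frob Δ ^ 2 := by ring

theorem empirical_RE_condition_general {p q : ℕ}
    (Sxx : Matrix (Fin p) (Fin p) ℝ)
    (Θstar Θhat : Matrix (Fin q) (Fin q) ℝ)
    (S : Finset (Fin p × Fin q)) (κ Δ₁ : ℝ)
    (hRE : ∀ Δ : Matrix (Fin p) (Fin q) ℝ,
      l11 (restr2 Δ Sᶜ) ≤ 3 * l11 (restr2 Δ S) →
      κ * frob Δ ^ 2 ≤ (1 / 2) * Matrix.trace (Δᵀ * Sxx * Δ * Θstar))
    (hclose : spec (Θhat - Θstar) ≤ Δ₁) :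
    ∀ Δ : Matrix (Fin p) (Fin q) ℝ,
      l11 (restr2 Δ Sᶜ) ≤ 3 * l11 (restr2 Δ S) →
      (κ - spec Sxx * Δ₁ / 2) * frob Δ ^ 2
        ≤ (1 / 2) * Matrix.trace (Δᵀ * Sxx * Δ * Θhat) := by
  intro Δ hcone
  have hsplit : trace (Δᵀ * Sxx * Δ * Θhat)
      = trace (Δᵀ * Sxx * Δ * Θstar) + trace (Δᵀ * Sxx * Δ * (Θhat - Θstar)) := by
    rw [Matrix.mul_sub, trace_sub]
    ring
  have hperturb :
      spec Sxx * spec (Θhat - Θstar) * frob Δ ^ 2 ≤ spec Sxx * Δ₁ * frob Δ ^ 2 := by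
    gcongr
    exact spec_nonneg Sxx
  have hlower := neg_abs_le (trace (Δᵀ * Sxx * Δ * (Θhat - Θstar)))
  have hupper := abs_trace_sandwich_le Sxx (Θhat - Θstar) Δ
  linarith [hRE Δ hcone]

/-- Suppose `EL(Δ) = (1/2)Tr(Δᵀ S_xx Δ Θ*) ≥ κ⦀Δ⦀_F²` for all `Δ` in the cone
`C(S)`, and `⦀Θ̂ − Θ*⦀₂ ≤ Δ₁`. Then the empirical excess loss with `Θ̂` in place of `Θ*`
satisfies `(1/2)Tr(Δᵀ S_xx Δ Θ̂) ≥ (κ − ⦀S_xx⦀₂ Δ₁/2) ⦀Δ⦀_F²` on the cone. -/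
theorem empirical_RE_condition {p q : ℕ}
    (Sxx : Matrix (Fin p) (Fin p) ℝ) (hSxx : Sxx.PosSemidef)
    (Θstar Θhat : Matrix (Fin q) (Fin q) ℝ)
    (hΘstar : Θstar.IsSymm) (hΘhat : Θhat.IsSymm)
    (S : Finset (Fin p × Fin q)) (κ Δ₁ : ℝ) (hκ : 0 < κ) (hΔ₁ : 0 ≤ Δ₁)
    (hRE : ∀ Δ : Matrix (Fin p) (Fin q) ℝ,
      l11 (restr2 Δ Sᶜ) ≤ 3 * l11 (restr2 Δ S) →
      κ * frob Δ ^ 2 ≤ (1 / 2) * Matrix.trace (Δᵀ * Sxx * Δ * Θstar))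
    (hclose : spec (Θhat - Θstar) ≤ Δ₁) :
    ∀ Δ : Matrix (Fin p) (Fin q) ℝ,
      l11 (restr2 Δ Sᶜ) ≤ 3 * l11 (restr2 Δ S) →
      (κ - spec Sxx * Δ₁ / 2) * frob Δ ^ 2
        ≤ (1 / 2) * Matrix.trace (Δᵀ * Sxx * Δ * Θhat) :=
  empirical_RE_condition_general Sxx Θstar Θhat S κ Δ₁ hRE hclose
end
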